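/- arXiv:1708.07580 — 5 statements merged into one kernel-verified Lean document; each statement's English description precedes it below -/
import Mathlib

section
/- For any real number q > 0 and any profile of linear orders, a committee W of size k satisfies generalised q-PSC if and only if it satisfies q-PSC. -/
variable {V C : Type*}

/-- Strict part of a weak preference relation. -/
def StrictPref (R : C → C → Prop) (a b : C) : Prop :=
  R a b ∧ ¬ R b a

/-- A complete and transitive preference relation (total preorder). -/
def TotalPreorderRel (R : C → C → Prop) : Prop :=
  Total R ∧ Transitive R

/-- A linear order (strict preferences): complete, transitive and antisymmetric. -/
def LinearPrefRel (R : C → C → Prop) : Prop :=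
  Total R ∧ Transitive R ∧ ∀ a b : C, R a b → R b a → a = b

/-- A dichotomous preference: a total preorder with at most two indifference classes
(equivalently, no strict chain of length three). -/
def DichotomousPref (R : C → C → Prop) : Prop :=
  TotalPreorderRel R ∧ ∀ a b c : C, StrictPref R a b → ¬ StrictPref R b c

/-- `N'` is a solid coalition for `C'`: every voter in `N'` strictly prefers every
candidate in `C'` to every candidate outside `C'`. -/
def SolidCoalition (R : V → C → C → Prop) (N' : Finset V) (C' : Finset C) : Prop :=
  ∀ i ∈ N', ∀ c' ∈ C', ∀ c : C, c ∉ C' → StrictPref (R i) c' c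

/-- `N'` is a generalised solid coalition for `C'`: every voter in `N'` weakly prefers
every candidate in `C'` to every candidate outside `C'`. -/
def GenSolidCoalition (R : V → C → C → Prop) (N' : Finset V) (C' : Finset C) : Prop :=
  ∀ i ∈ N', ∀ c' ∈ C', ∀ c : C, c ∉ C' → R i c' c

/-- Candidate `c` is within voter `i`'s top `t` positions:
fewer than `t` candidates are strictly preferred to `c`. -/
def WithinTop (R : C → C → Prop) (c : C) (t : ℕ) : Prop :=
  ({d : C | StrictPref R d c}).ncard < t

/-- `W` satisfies q-PSC. -/
def QPSC [DecidableEq C] (R : V → C → C → Prop) (W : Finset C) (q : ℝ) : Prop :=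
  ∀ ℓ : ℕ, 0 < ℓ → ∀ N' : Finset V, ∀ C' : Finset C,
    SolidCoalition R N' C' → (ℓ : ℝ) * q ≤ (N'.card : ℝ) →
    min ℓ C'.card ≤ (W ∩ C').card

/-- `W` satisfies weak q-PSC. -/
def WeakQPSC [DecidableEq C] (R : V → C → C → Prop) (W : Finset C) (q : ℝ) : Prop :=
  ∀ ℓ : ℕ, 0 < ℓ → ∀ N' : Finset V, ∀ C' : Finset C,
    C'.card ≤ ℓ → SolidCoalition R N' C' → (ℓ : ℝ) * q ≤ (N'.card : ℝ) →
    min ℓ C'.card ≤ (W ∩ C').card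

/-- `W` satisfies generalised q-PSC. -/
def GenQPSC (R : V → C → C → Prop) (W : Finset C) (q : ℝ) : Prop :=
  ∀ ℓ : ℕ, 0 < ℓ → ∀ N' : Finset V, ∀ C' : Finset C,
    GenSolidCoalition R N' C' → (ℓ : ℝ) * q ≤ (N'.card : ℝ) →
    ∃ C'' : Finset C, C'' ⊆ W ∧ min ℓ C'.card ≤ C''.card ∧
      ∀ c'' ∈ C'', ∃ i ∈ N', WithinTop (R i) c'' C'.card

/-- `W` satisfies generalised weak q-PSC. -/
def GenWeakQPSC (R : V → C → C → Prop) (W : Finset C) (q : ℝ) : Prop :=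
  ∀ ℓ : ℕ, 0 < ℓ → ∀ N' : Finset V, ∀ C' : Finset C,
    C'.card ≤ ℓ → GenSolidCoalition R N' C' → (ℓ : ℝ) * q ≤ (N'.card : ℝ) →
    ∃ C'' : Finset C, C'' ⊆ W ∧ min ℓ C'.card ≤ C''.card ∧
      ∀ c'' ∈ C'', ∃ i ∈ N', WithinTop (R i) c'' C'.card

/-!
With strict preferences a generalised solid coalition is solid. For a solid coalition `N'`
for `C'`, the candidates within the top `|C'|` of any member of `N'` are exactly those of `C'`
(given finitely many candidates, since `Set.ncard` of an infinite set is `0`). Hence the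
witnesses `C''` demanded by generalised `q`-PSC are precisely the subsets of `W ∩ C'`, and the
two axioms coincide.
-/

section

variable {R : V → C → C → Prop} {N' : Finset V} {C' : Finset C} {i : V} {c : C}

theorem StrictPref.asymm {r : C → C → Prop} {a b : C} (h : StrictPref r a b) :
    ¬ StrictPref r b a :=
  fun h' => h.2 h'.1

theorem StrictPref.irrefl (r : C → C → Prop) (a : C) : ¬ StrictPref r a a :=
  fun h => h.2 h.1

theorem SolidCoalition.genSolidCoalition (h : SolidCoalition R N' C') :
    GenSolidCoalition R N' C' :=
  fun i hi c' hc' c hc => (h i hi c' hc' c hc).1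

theorem GenSolidCoalition.solidCoalition (hR : ∀ i a b, R i a b → R i b a → a = b)
    (h : GenSolidCoalition R N' C') : SolidCoalition R N' C' := by
  intro i hi c' hc' c hc
  refine ⟨h i hi c' hc' c hc, fun hcc' => ?_⟩
  exact hc (hR i c' c (h i hi c' hc' c hc) hcc' ▸ hc')

theorem SolidCoalition.mem_of_withinTop [Finite C] (h : SolidCoalition R N' C') (hi : i ∈ N')
    (hc : WithinTop (R i) c C'.card) : c ∈ C' := by
  by_contra hcC'
  have hC'_above : (C' : Set C) ⊆ {d | StrictPref (R i) d c} :=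
    fun d hd => h i hi d hd c hcC'
  have := Set.ncard_le_ncard hC'_above (Set.toFinite _)
  rw [Set.ncard_coe_finset] at this
  exact absurd hc this.not_gt

theorem SolidCoalition.withinTop (h : SolidCoalition R N' C') (hi : i ∈ N') (hc : c ∈ C') :
    WithinTop (R i) c C'.card := by
  have hAbove_ssub : {d | StrictPref (R i) d c} ⊂ (C' : Set C) := by
    refine ⟨fun d hd => ?_, fun hC' => StrictPref.irrefl (R i) c (hC' hc)⟩
    by_contra hd'
    exact (h i hi c hc d hd').asymm hd
  have := Set.ncard_lt_ncard hAbove_ssub C'.finite_toSet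
  rwa [Set.ncard_coe_finset] at this

end

variable [DecidableEq C] {R : V → C → C → Prop} {W : Finset C} {q : ℝ}

theorem GenQPSC.qPSC [Finite C] (hgen : GenQPSC R W q) : QPSC R W q := by
  intro ℓ hℓ N' C' hsolid hsize
  obtain ⟨C'', hC''W, hcard, htop⟩ := hgen ℓ hℓ N' C' hsolid.genSolidCoalition hsize
  have hC''C' : C'' ⊆ C' := fun c hc => by
    obtain ⟨i, hi, hwt⟩ := htop c hc
    exact hsolid.mem_of_withinTop hi hwt
  exact hcard.trans (Finset.card_le_card (Finset.subset_inter hC''W hC''C'))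

theorem QPSC.genQPSC (hR : ∀ i a b, R i a b → R i b a → a = b) (hq : 0 < q)
    (hpsc : QPSC R W q) : GenQPSC R W q := by
  intro ℓ hℓ N' C' hgen hsize
  have hsolid := hgen.solidCoalition hR
  obtain ⟨i, hi⟩ : N'.Nonempty := by
    rw [← Finset.card_pos, ← Nat.cast_pos (α := ℝ)]
    exact (mul_pos (Nat.cast_pos.mpr hℓ) hq).trans_le hsize
  refine ⟨W ∩ C', Finset.inter_subset_left, hpsc ℓ hℓ N' C' hsolid hsize, fun c hc => ?_⟩
  exact ⟨i, hi, hsolid.withinTop hi (Finset.mem_inter.mp hc).2⟩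

theorem genQPSC_iff_qPSC_of_linear_general
    {V C : Type*} [Fintype C] [DecidableEq C]
    (R : V → C → C → Prop) (hR : ∀ i : V, LinearPrefRel (R i))
    (W : Finset C)
    (q : ℝ) (hq : 0 < q) :
    GenQPSC R W q ↔ QPSC R W q :=
  ⟨GenQPSC.qPSC, QPSC.genQPSC (fun i => (hR i).2.2) hq⟩

/-- under linear orders, generalised q-PSC is equivalent to q-PSC. -/
theorem genQPSC_iff_qPSC_of_linear
    {V C : Type*} [Fintype V] [Fintype C] [DecidableEq C]
    (R : V → C → C → Prop) (hR : ∀ i : V, LinearPrefRel (R i))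
    (k : ℕ) (hk1 : 1 ≤ k) (hkm : k ≤ Fintype.card C)
    (W : Finset C) (hW : W.card = k)
    (q : ℝ) (hq : 0 < q) :
    GenQPSC R W q ↔ QPSC R W q :=
  genQPSC_iff_qPSC_of_linear_general R hR W q hq
end

section
/- Under dichotomous preferences, if a committee W of size k satisfies generalised weak Hare-PSC (generalised weak q-PSC with q = n/k), then W satisfies PJR for the approval sets (A_1,…,A_n) derived from the preferences. -/
variable {V C : Type*}

/-- Voter `i`'s approval set: her top indifference class. -/
def ApprovalSet (R : C → C → Prop) : Set C := {c : C | ∀ d : C, R c d}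

/-- `W` (of size `k`) satisfies proportional justified representation. -/
def PJR [Fintype V] (R : V → C → C → Prop) (W : Finset C) (k : ℕ) : Prop :=
  ∀ ℓ : ℕ, 0 < ℓ → ℓ ≤ k →
    ¬ ∃ Nstar : Finset V,
      (ℓ : ℝ) * (Fintype.card V : ℝ) / (k : ℝ) ≤ (Nstar.card : ℝ) ∧
      ℓ ≤ (⋂ i ∈ Nstar, ApprovalSet (R i)).ncard ∧
      ((⋃ i ∈ Nstar, ApprovalSet (R i)) ∩ (W : Set C)).ncard < ℓ

/-! A voter approves exactly the candidates she ranks top, so by transitivity every candidate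
she does not approve is ranked strictly below every approved one. So if a group `N*` of at least
`ℓ · n / k` voters approves `ℓ` common candidates `C'`, then `N*` is a generalised solid coalition
for `C'`, and generalised weak Hare-PSC yields `ℓ` members of `W`, each within the top `ℓ` of
some voter of `N*`. Such a candidate has fewer than `ℓ = |C'|` candidates strictly above it, so
it cannot lie below all of `C'`: it is approved by that voter, and `N*` is represented `ℓ` times. -/

section ApprovalSet

variable {R : C → C → Prop}

theorem strictPref_of_mem_approvalSet_of_notMem [IsTrans C R] {a b : C}
    (ha : a ∈ ApprovalSet R) (hb : b ∉ ApprovalSet R) : StrictPref R a b :=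
  ⟨ha b, fun hba => hb fun d => _root_.trans hba (ha d)⟩

theorem mem_approvalSet_of_withinTop [Finite C] [IsTrans C R] {C' : Finset C}
    (hC' : (C' : Set C) ⊆ ApprovalSet R) {c : C} (hc : WithinTop R c C'.card) :
    c ∈ ApprovalSet R := by
  by_contra hnot
  have hbelow : (C' : Set C) ⊆ {d : C | StrictPref R d c} := fun d hd =>
    strictPref_of_mem_approvalSet_of_notMem (hC' hd) hnot
  have hcard := Set.ncard_le_ncard hbelow
  rw [Set.ncard_coe_finset] at hcard
  exact hcard.not_gt hc

end ApprovalSet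

theorem genSolidCoalition_of_subset_iInter_approvalSet {R : V → C → C → Prop} {N' : Finset V}
    {C' : Finset C} (hC' : (C' : Set C) ⊆ ⋂ i ∈ N', ApprovalSet (R i)) :
    GenSolidCoalition R N' C' := fun i hi _ hc' c _ =>
  Set.mem_iInter₂.mp (hC' hc') i hi c

theorem exists_finset_subset_card_eq [Finite C] {s : Set C} {n : ℕ} (hn : n ≤ s.ncard) :
    ∃ t : Finset C, (t : Set C) ⊆ s ∧ t.card = n := by
  obtain ⟨t, hts, htn⟩ := Set.exists_subset_card_eq hn
  lift t to Finset C using t.toFinite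
  exact ⟨t, hts, by rwa [Set.ncard_coe_finset] at htn⟩

theorem le_ncard_iUnion_approvalSet_inter_of_genWeakQPSC [Finite C] {R : V → C → C → Prop}
    [∀ i, IsTrans C (R i)] {W : Finset C} {q : ℝ} (hpsc : GenWeakQPSC R W q)
    {ℓ : ℕ} (hℓ : 0 < ℓ) {N' : Finset V} (hN' : (ℓ : ℝ) * q ≤ N'.card)
    (hcommon : ℓ ≤ (⋂ i ∈ N', ApprovalSet (R i)).ncard) :
    ℓ ≤ ((⋃ i ∈ N', ApprovalSet (R i)) ∩ (W : Set C)).ncard := by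
  obtain ⟨C', hC'common, hC'card⟩ := exists_finset_subset_card_eq hcommon
  obtain ⟨C'', hC''W, hC''card, hC''top⟩ := hpsc ℓ hℓ N' C' hC'card.le
    (genSolidCoalition_of_subset_iInter_approvalSet hC'common) hN'
  have hC''approved : (C'' : Set C) ⊆ (⋃ i ∈ N', ApprovalSet (R i)) ∩ (W : Set C) := by
    intro c hc
    obtain ⟨i, hi, hctop⟩ := hC''top c hc
    have hC'approved : (C' : Set C) ⊆ ApprovalSet (R i) := fun d hd =>
      Set.mem_iInter₂.mp (hC'common hd) i hi
    exact ⟨Set.mem_biUnion hi (mem_approvalSet_of_withinTop hC'approved hctop),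
      hC''W hc⟩
  calc ℓ = min ℓ C'.card := by rw [hC'card, min_self]
    _ ≤ C''.card := hC''card
    _ = (C'' : Set C).ncard := (Set.ncard_coe_finset C'').symm
    _ ≤ _ := Set.ncard_le_ncard hC''approved

theorem genWeakHarePSC_implies_PJR_general
    {V C : Type*} [Fintype V] [Fintype C]
    (R : V → C → C → Prop) (hR : ∀ i : V, DichotomousPref (R i))
    (k : ℕ)
    (W : Finset C)
    (hpsc : GenWeakQPSC R W ((Fintype.card V : ℝ) / (k : ℝ))) :
    PJR R W k := by
  rintro ℓ hℓ - ⟨Nstar, hsize, hcommon, hunderrepresented⟩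
  have hquota : (ℓ : ℝ) * ((Fintype.card V : ℝ) / k) ≤ Nstar.card := by
    rwa [← mul_div_assoc]
  have : ∀ i, IsTrans C (R i) := fun i => ⟨(hR i).1.2⟩
  exact hunderrepresented.not_ge <|
    le_ncard_iUnion_approvalSet_inter_of_genWeakQPSC hpsc hℓ hquota hcommon

/-- under dichotomous preferences, generalised weak Hare-PSC
implies PJR. -/
theorem genWeakHarePSC_implies_PJR
    {V C : Type*} [Fintype V] [Fintype C] [DecidableEq C]
    (R : V → C → C → Prop) (hR : ∀ i : V, DichotomousPref (R i))
    (k : ℕ) (hk1 : 1 ≤ k) (hkm : k ≤ Fintype.card C)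
    (W : Finset C) (hW : W.card = k)
    (hpsc : GenWeakQPSC R W ((Fintype.card V : ℝ) / (k : ℝ))) :
    PJR R W k :=
  genWeakHarePSC_implies_PJR_general R hR k W hpsc
end

section
/- Under dichotomous preferences, if a committee W of size k satisfies PJR for the approval sets (A_1,…,A_n) derived from the preferences, then W satisfies generalised Hare-PSC (generalised q-PSC with q = n/k). -/
variable {V C : Type*}

/-!
Under dichotomous preferences a candidate strictly preferred to anything is approved, so every
candidate is within voter `i`'s top `|A_i| + 1`, and approved candidates are within her top `t`
for all `t ≥ 1`. If `N'` is a generalised solid coalition for `C'`, each `A_i` (`i ∈ N'`) either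
contains `C'` or is a proper subset of it. In the second case any `min ℓ |C'|` members of `W`
are within `i`'s top `|C'|`. In the first case `N'` is cohesive on `C'`, and PJR yields
`min ℓ |C'|` members of `W` approved by someone in `N'`.
-/

section Preferences

variable {R : C → C → Prop}

theorem StrictPref.mem_approvalSet (hR : DichotomousPref R) {c d : C}
    (hdc : StrictPref R d c) : d ∈ ApprovalSet R := by
  intro e
  by_contra hde
  exact hR.2 e d c ⟨(hR.1.1 d e).resolve_left hde, hde⟩ hdc

theorem withinTop_of_mem_approvalSet {c : C} {t : ℕ} (hc : c ∈ ApprovalSet R) (ht : 0 < t) :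
    WithinTop R c t := by
  have hempty : {d : C | StrictPref R d c} = ∅ :=
    Set.eq_empty_of_forall_notMem fun d hdc => hdc.2 (hc d)
  simpa [WithinTop, hempty] using ht

theorem withinTop_of_ncard_approvalSet_lt [Finite C] (hR : DichotomousPref R) (c : C) {t : ℕ}
    (ht : (ApprovalSet R).ncard < t) : WithinTop R c t :=
  (Set.ncard_le_ncard (fun _ hd => StrictPref.mem_approvalSet hR hd)).trans_lt ht

end Preferences

section Coalitions

variable {R : V → C → C → Prop} {N' : Finset V} {C' : Finset C} {i : V}

theorem GenSolidCoalition.approvalSet_subset_or_subset (hsolid : GenSolidCoalition R N' C')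
    (htrans : Transitive (R i)) (hi : i ∈ N') :
    ApprovalSet (R i) ⊆ C' ∨ (C' : Set C) ⊆ ApprovalSet (R i) := by
  refine or_iff_not_imp_left.2 fun hnot c' hc' d => ?_
  obtain ⟨a, ha, haC'⟩ := Set.not_subset.1 hnot
  exact htrans (hsolid i hi c' hc' a haC') (ha d)

theorem GenSolidCoalition.ncard_approvalSet_lt (hsolid : GenSolidCoalition R N' C')
    (htrans : Transitive (R i)) (hi : i ∈ N') (hnot : ¬ (C' : Set C) ⊆ ApprovalSet (R i)) :
    (ApprovalSet (R i)).ncard < C'.card := by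
  have hss : ApprovalSet (R i) ⊂ C' :=
    ⟨(hsolid.approvalSet_subset_or_subset htrans hi).resolve_right hnot, hnot⟩
  simpa using Set.ncard_lt_ncard hss C'.finite_toSet

end Coalitions

section PJR

variable [Fintype V] [Finite C] {R : V → C → C → Prop} {W : Finset C} {k : ℕ}

theorem PJR.card_pos [Nonempty C] (hpjr : PJR R W k) (hk : 1 ≤ k) :
    0 < Fintype.card V := by
  refine Nat.pos_of_ne_zero fun hV => hpjr 1 one_pos hk ⟨∅, ?_, ?_, ?_⟩
  · simp [hV]
  · simp only [Finset.notMem_empty, Set.iInter_of_empty, Set.iInter_univ, Set.ncard_univ]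
    exact Nat.card_pos
  · simp

theorem PJR.exists_approved_subset (hpjr : PJR R W k) {ℓ : ℕ} (hℓ : 0 < ℓ) (hℓk : ℓ ≤ k)
    {N' : Finset V} {C' : Finset C} (hquota : (ℓ : ℝ) * Fintype.card V / k ≤ N'.card)
    (hC' : ∀ i ∈ N', (C' : Set C) ⊆ ApprovalSet (R i)) (hℓC' : ℓ ≤ C'.card) :
    ∃ C'' ⊆ W, ℓ ≤ C''.card ∧ ∀ c ∈ C'', ∃ i ∈ N', c ∈ ApprovalSet (R i) := by
  classical
  set C'' := W.filter fun c => ∃ i ∈ N', c ∈ ApprovalSet (R i)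
  have hC'' : (⋃ i ∈ N', ApprovalSet (R i)) ∩ W = C'' := by
    ext c
    simp [C'', and_comm]
  have hcohesive : ℓ ≤ (⋂ i ∈ N', ApprovalSet (R i)).ncard := by
    calc ℓ ≤ C'.card := hℓC'
      _ = (C' : Set C).ncard := (Set.ncard_coe_finset C').symm
      _ ≤ _ := Set.ncard_le_ncard (Set.subset_iInter₂ hC') (Set.toFinite _)
  refine ⟨C'', W.filter_subset _, ?_, fun c hc => (W.mem_filter.1 hc).2⟩
  by_contra! hfew
  exact hpjr ℓ hℓ hℓk ⟨N', hquota, hcohesive, by rwa [hC'', Set.ncard_coe_finset]⟩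

end PJR

theorem Nat.le_of_cast_mul_div_le {ℓ n k : ℕ} (hn : 0 < n) (hk : 0 < k)
    (h : (ℓ : ℝ) * (n / k) ≤ n) : ℓ ≤ k := by
  have hkR : (0 : ℝ) < k := by exact_mod_cast hk
  have hnR : (0 : ℝ) < n := by exact_mod_cast hn
  rw [mul_div_assoc', div_le_iff₀ hkR] at h
  have hℓk : (ℓ : ℝ) ≤ k := le_of_mul_le_mul_right (by linarith) hnR
  exact_mod_cast hℓk

theorem PJR_implies_genHarePSC_general
    {V C : Type*} [Fintype V] [Fintype C]
    (R : V → C → C → Prop) (hR : ∀ i : V, DichotomousPref (R i))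
    (k : ℕ) (hk1 : 1 ≤ k)
    (W : Finset C) (hW : W.card = k)
    (hpjr : PJR R W k) :
    GenQPSC R W ((Fintype.card V : ℝ) / (k : ℝ)) := by
  intro ℓ _ N' C' hsolid hquota
  set ℓ' := min ℓ C'.card
  obtain hℓ' | hℓ' := Nat.eq_zero_or_pos ℓ'
  · exact ⟨∅, W.empty_subset, hℓ'.le, by simp⟩
  have hC' : 0 < C'.card := hℓ'.trans_le (min_le_right _ _)
  have : Nonempty C := ⟨(Finset.card_pos.1 hC').choose⟩
  have hℓk : ℓ ≤ k := Nat.le_of_cast_mul_div_le (hpjr.card_pos hk1) hk1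
    (hquota.trans (by exact_mod_cast N'.card_le_univ))
  have hℓ'k : ℓ' ≤ k := (min_le_left _ _).trans hℓk
  by_cases happroved : ∀ i ∈ N', (C' : Set C) ⊆ ApprovalSet (R i)
  · have hquota' : (ℓ' : ℝ) * Fintype.card V / k ≤ N'.card := by
      rw [mul_div_assoc]
      exact le_trans (by gcongr; exact_mod_cast min_le_left _ _) hquota
    obtain ⟨C'', hW', hcard, hC''⟩ :=
      hpjr.exists_approved_subset hℓ' hℓ'k hquota' happroved (min_le_right _ _)
    exact ⟨C'', hW', hcard, fun c hc => (hC'' c hc).imp fun i ⟨hi, hci⟩ =>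
      ⟨hi, withinTop_of_mem_approvalSet hci hC'⟩⟩
  · push Not at happroved
    obtain ⟨i, hi, hnot⟩ := happroved
    have hsmall := hsolid.ncard_approvalSet_lt (hR i).1.2 hi hnot
    obtain ⟨C'', hW', hcard⟩ := W.exists_subset_card_eq (hW ▸ hℓ'k)
    exact ⟨C'', hW', hcard.ge, fun c _ =>
      ⟨i, hi, withinTop_of_ncard_approvalSet_lt (hR i) c hsmall⟩⟩

/-- under dichotomous preferences, PJR implies generalised Hare-PSC. -/
theorem PJR_implies_genHarePSC
    {V C : Type*} [Fintype V] [Fintype C] [DecidableEq C]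
    (R : V → C → C → Prop) (hR : ∀ i : V, DichotomousPref (R i))
    (k : ℕ) (hk1 : 1 ≤ k) (hkm : k ≤ Fintype.card C)
    (W : Finset C) (hW : W.card = k)
    (hpjr : PJR R W k) :
    GenQPSC R W ((Fintype.card V : ℝ) / (k : ℝ)) :=
  PJR_implies_genHarePSC_general R hR k hk1 W hW hpjr
end

section
/- Under dichotomous preferences, for a committee W of size k the following three properties are equivalent: W satisfies PJR for the approval sets derived from the preferences; W satisfies generalised Hare-PSC (generalised q-PSC with q = n/k); and W satisfies generalised weak Hare-PSC (generalised weak q-PSC with q = n/k). -/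
variable {V C : Type*}

/-! With dichotomous preferences a candidate is within voter `i`'s top `t` (for `t ≥ 1`) exactly
when `i` approves it or `i` approves fewer than `t` candidates. A generalised solid coalition
for `C'` therefore either contains a voter approving fewer than `|C'|` candidates, and then
every committee member is within that voter's top `|C'|`, or all its voters approve `C'`, and
then it is a cohesive group to which PJR applies. Conversely, a cohesive group with `ℓ` commonly
approved candidates is a generalised solid coalition for any `ℓ` of them, with `|C'| = ℓ`, so
weak PSC applies to it. -/

theorem setOf_strictPref_eq_empty {R : C → C → Prop} {c : C} (hc : c ∈ ApprovalSet R) :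
    {d : C | StrictPref R d c} = ∅ :=
  Set.eq_empty_of_forall_notMem fun _ hd => hd.2 (hc _)

namespace DichotomousPref

variable {R : C → C → Prop}

theorem setOf_strictPref_eq_approvalSet (h : DichotomousPref R) {c : C}
    (hc : c ∉ ApprovalSet R) : {d : C | StrictPref R d c} = ApprovalSet R := by
  ext d
  refine ⟨fun hdc e => ?_, fun hd => ⟨hd c, fun hcd => hc fun e => h.1.2 hcd (hd e)⟩⟩
  by_contra hde
  exact h.2 e d c ⟨(h.1.1 d e).resolve_left hde, hde⟩ hdc

theorem withinTop_iff (h : DichotomousPref R) {c : C} {t : ℕ} (ht : 0 < t) :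
    WithinTop R c t ↔ c ∈ ApprovalSet R ∨ (ApprovalSet R).ncard < t := by
  by_cases hc : c ∈ ApprovalSet R
  · simp [WithinTop, setOf_strictPref_eq_empty hc, hc, ht]
  · simp [WithinTop, h.setOf_strictPref_eq_approvalSet hc, hc]

theorem approvalSet_subset_or_subset_approvalSet (h : DichotomousPref R) {C' : Set C}
    (hC' : ∀ c' ∈ C', ∀ c ∉ C', R c' c) : ApprovalSet R ⊆ C' ∨ C' ⊆ ApprovalSet R := by
  refine or_iff_not_imp_left.2 fun hA c' hc' d => ?_
  obtain ⟨c, hcA, hcC'⟩ := Set.not_subset.1 hA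
  exact h.1.2 (hC' c' hc' c hcC') (hcA d)

end DichotomousPref

namespace GenSolidCoalition

variable {R : V → C → C → Prop} {N : Finset V} {C' : Finset C}

theorem of_subset_approvalSet (h : ∀ i ∈ N, ↑C' ⊆ ApprovalSet (R i)) :
    GenSolidCoalition R N C' :=
  fun i hi _ hc' c _ => h i hi hc' c

theorem subset_approvalSet_or_ncard_lt (h : GenSolidCoalition R N C')
    (hR : ∀ i, DichotomousPref (R i)) {i : V} (hi : i ∈ N) :
    ↑C' ⊆ ApprovalSet (R i) ∨ (ApprovalSet (R i)).ncard < C'.card := by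
  rcases (hR i).approvalSet_subset_or_subset_approvalSet (h i hi) with hAC' | hC'A
  · refine (lt_or_ge _ _).symm.imp (fun hge => ?_) id
    exact (Set.eq_of_subset_of_ncard_le hAC' (by simpa using hge)).ge
  · exact Or.inl hC'A

end GenSolidCoalition

namespace PJR

variable [Fintype V] {R : V → C → C → Prop} {W : Finset C} {k : ℕ}

theorem le_ncard_union_inter (h : PJR R W k) {ℓ : ℕ} (hℓ : 0 < ℓ) (hℓk : ℓ ≤ k) {N : Finset V}
    (hquota : (ℓ : ℝ) * Fintype.card V / k ≤ N.card)
    (hcohesive : ℓ ≤ (⋂ i ∈ N, ApprovalSet (R i)).ncard) :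
    ℓ ≤ ((⋃ i ∈ N, ApprovalSet (R i)) ∩ (W : Set C)).ncard :=
  not_lt.1 fun hlt => h ℓ hℓ hℓk ⟨N, hquota, hcohesive, hlt⟩

theorem card_pos_s10 [Finite C] (h : PJR R W k) (hk : 0 < k) (hW : W.card = k) :
    0 < Fintype.card V := by
  refine Nat.pos_of_ne_zero fun hn => h 1 one_pos hk ⟨∅, by simp [hn], ?_, by simp⟩
  simp only [Finset.notMem_empty, Set.iInter_of_empty, Set.iInter_univ]
  calc 1 ≤ W.card := hW ▸ hk
    _ = (W : Set C).ncard := (Set.ncard_coe_finset W).symm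
    _ ≤ Set.univ.ncard := Set.ncard_le_ncard (Set.subset_univ _)

end PJR

theorem GenQPSC.genWeakQPSC {R : V → C → C → Prop} {W : Finset C} {q : ℝ}
    (h : GenQPSC R W q) : GenWeakQPSC R W q :=
  fun ℓ hℓ N C' _ => h ℓ hℓ N C'

theorem genQPSC_of_pjr [Fintype V] [Finite C] {R : V → C → C → Prop}
    (hR : ∀ i, DichotomousPref (R i)) {W : Finset C} {k : ℕ} (hk : 0 < k) (hW : W.card = k)
    (h : PJR R W k) : GenQPSC R W (Fintype.card V / k) := by
  intro ℓ hℓ N C' hN hquota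
  have hn : (0 : ℝ) < Fintype.card V := by exact_mod_cast h.card_pos_s10 hk hW
  have hℓk : ℓ ≤ k := by
    have : (ℓ : ℝ) * (Fintype.card V / k) ≤ Fintype.card V :=
      hquota.trans (by exact_mod_cast N.card_le_univ)
    rw [mul_div_assoc', div_le_iff₀ (by exact_mod_cast hk)] at this
    exact_mod_cast le_of_mul_le_mul_right (by linarith : (ℓ : ℝ) * Fintype.card V ≤ k * _) hn
  set t := min ℓ C'.card
  rcases Nat.eq_zero_or_pos t with ht | ht
  · exact ⟨∅, W.empty_subset, ht.le, by simp⟩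
  have htk : t ≤ k := (min_le_left _ _).trans hℓk
  have hC' : 0 < C'.card := ht.trans_le (min_le_right _ _)
  by_cases hsmall : ∃ i ∈ N, (ApprovalSet (R i)).ncard < C'.card
  · obtain ⟨i, hi, hlt⟩ := hsmall
    obtain ⟨C'', hC''W, hC''⟩ := W.exists_subset_card_eq (hW ▸ htk)
    exact ⟨C'', hC''W, hC''.ge, fun _ _ => ⟨i, hi, ((hR i).withinTop_iff hC').2 (Or.inr hlt)⟩⟩
  push Not at hsmall
  have hC'A : ∀ i ∈ N, ↑C' ⊆ ApprovalSet (R i) := fun i hi =>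
    (hN.subset_approvalSet_or_ncard_lt hR hi).resolve_right (hsmall i hi).not_gt
  have hcohesive : t ≤ (⋂ i ∈ N, ApprovalSet (R i)).ncard :=
    calc t ≤ C'.card := min_le_right _ _
      _ = (C' : Set C).ncard := (Set.ncard_coe_finset C').symm
      _ ≤ _ := Set.ncard_le_ncard (Set.subset_iInter₂ hC'A)
  have htquota : (t : ℝ) * Fintype.card V / k ≤ N.card := by
    rw [mul_div_assoc]
    exact le_trans (by gcongr; exact_mod_cast min_le_left _ _) hquota
  have hrep := h.le_ncard_union_inter ht htk htquota hcohesive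
  set S := (⋃ i ∈ N, ApprovalSet (R i)) ∩ (W : Set C)
  refine ⟨S.toFinite.toFinset, S.toFinite.toFinset_subset.2 Set.inter_subset_right,
    by rwa [← Set.ncard_eq_toFinset_card], fun c hc => ?_⟩
  obtain ⟨i, hi, hci⟩ := Set.mem_iUnion₂.1 (S.toFinite.mem_toFinset.1 hc).1
  exact ⟨i, hi, ((hR i).withinTop_iff hC').2 (Or.inl hci)⟩

theorem pjr_of_genWeakQPSC [Fintype V] [Finite C] {R : V → C → C → Prop}
    (hR : ∀ i, DichotomousPref (R i)) {W : Finset C} {k : ℕ}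
    (h : GenWeakQPSC R W (Fintype.card V / k)) : PJR R W k := by
  rintro ℓ hℓ - ⟨N, hquota, hcohesive, hlt⟩
  set X := ⋂ i ∈ N, ApprovalSet (R i)
  obtain ⟨C', hC'X, hC'⟩ := X.toFinite.toFinset.exists_subset_card_eq
    (hcohesive.trans_eq (Set.ncard_eq_toFinset_card X))
  rw [Set.Finite.subset_toFinset] at hC'X
  have hN : GenSolidCoalition R N C' :=
    .of_subset_approvalSet fun i hi => hC'X.trans (Set.biInter_subset_of_mem hi)
  obtain ⟨C'', hC''W, hC'', hC''top⟩ := h ℓ hℓ N C' hC'.le hN (by rwa [← mul_div_assoc])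
  rw [hC', min_self] at hC''
  have hC''sub : ↑C'' ⊆ (⋃ i ∈ N, ApprovalSet (R i)) ∩ (W : Set C) := fun c hc => by
    obtain ⟨i, hi, htop⟩ := hC''top c hc
    rw [hC', (hR i).withinTop_iff hℓ] at htop
    -- a voter of a cohesive group approves at least `ℓ` candidates
    refine ⟨Set.mem_iUnion₂.2 ⟨i, hi, htop.resolve_right ?_⟩, hC''W hc⟩
    exact not_lt.2 (hcohesive.trans (Set.ncard_le_ncard (Set.biInter_subset_of_mem hi)))
  exact hlt.not_ge (hC''.trans ((Set.ncard_coe_finset C'').ge.trans (Set.ncard_le_ncard hC''sub)))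

theorem PJR_genHarePSC_genWeakHarePSC_equiv_general
    {V C : Type*} [Fintype V] [Fintype C]
    (R : V → C → C → Prop) (hR : ∀ i : V, DichotomousPref (R i))
    (k : ℕ) (hk1 : 1 ≤ k)
    (W : Finset C) (hW : W.card = k) :
    (PJR R W k ↔ GenQPSC R W ((Fintype.card V : ℝ) / (k : ℝ))) ∧
    (PJR R W k ↔ GenWeakQPSC R W ((Fintype.card V : ℝ) / (k : ℝ))) := by
  have hPSC := genQPSC_of_pjr hR hk1 hW
  have hPJR := pjr_of_genWeakQPSC hR (W := W) (k := k)
  exact ⟨⟨hPSC, fun h => hPJR h.genWeakQPSC⟩, ⟨fun h => (hPSC h).genWeakQPSC, hPJR⟩⟩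

/-- under dichotomous preferences, PJR, generalised Hare-PSC and
generalised weak Hare-PSC are all equivalent. -/
theorem PJR_genHarePSC_genWeakHarePSC_equiv
    {V C : Type*} [Fintype V] [Fintype C] [DecidableEq C]
    (R : V → C → C → Prop) (hR : ∀ i : V, DichotomousPref (R i))
    (k : ℕ) (hk1 : 1 ≤ k) (hkm : k ≤ Fintype.card C)
    (W : Finset C) (hW : W.card = k) :
    (PJR R W k ↔ GenQPSC R W ((Fintype.card V : ℝ) / (k : ℝ))) ∧
    (PJR R W k ↔ GenWeakQPSC R W ((Fintype.card V : ℝ) / (k : ℝ))) :=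
  PJR_genHarePSC_genWeakHarePSC_equiv_general R hR k hk1 W hW
end

section
/- For every profile of linear orders of n voters over m candidates, every k with 1 ≤ k ≤ m, and every real number q with n/(k+1) < q ≤ n/k, there exists a committee W ⊆ C with |W| = k that satisfies q-PSC. -/
variable {V C : Type*}

/-!
The committee is built by q-STV with fractional transfers. Voters start with weight 1; in each
round the candidate outside the committee that reaches quota `q` at the smallest rank depth `j`
(supported by the voters ranking it within their top `j`) is elected, and those supporters pay
`q` in proportion to their weights. The invariant is that every solid coalition that demands
`ℓ` seats and lacks some of them still holds weight `q` for each missing seat: electing from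
its set `C'` costs it at most `q`, and otherwise the elected candidate's depth is at most `|C'|`,
so none of its members pays. After `k` rounds less than `q` weight is left, so no demand is
unmet.
-/

open Finset

lemma withinTop_card [Fintype C] (r : C → C → Prop) (c : C) :
    WithinTop r c (Fintype.card C) := by
  have hlt : {d : C | StrictPref r d c} ⊂ Set.univ :=
    Set.ssubset_univ_iff.2 <| (Set.ne_univ_iff_exists_notMem _).2 ⟨c, fun h => h.2 h.1⟩
  have := Set.ncard_lt_ncard hlt Set.finite_univ
  rwa [Set.ncard_univ, Nat.card_eq_fintype_card] at this

lemma withinTop_of_solidCoalition {R : V → C → C → Prop} {N' : Finset V} {C' : Finset C}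
    (hs : SolidCoalition R N' C') {i : V} (hi : i ∈ N') {c : C} (hc : c ∈ C') :
    WithinTop (R i) c C'.card := by
  classical
  have hsub : {d : C | StrictPref (R i) d c} ⊆ ↑(C'.erase c) := by
    intro d hd
    have hdC : d ∈ C' := by_contra fun hdC => hd.2 (hs i hi c hc d hdC).1
    exact mem_erase.2 ⟨by rintro rfl; exact hd.2 hd.1, hdC⟩
  have hle := Set.ncard_le_ncard hsub
  rw [Set.ncard_coe_finset] at hle
  exact hle.trans_lt (card_erase_lt_of_mem hc)

lemma not_withinTop_of_solidCoalition [Finite C] {R : V → C → C → Prop} {N' : Finset V}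
    {C' : Finset C} (hs : SolidCoalition R N' C') {i : V} (hi : i ∈ N') {c : C} (hc : c ∉ C')
    {j : ℕ} (hj : j ≤ C'.card) : ¬ WithinTop (R i) c j := by
  have hsub : (C' : Set C) ⊆ {d : C | StrictPref (R i) d c} := fun d hd => hs i hi d hd c hc
  have := Set.ncard_le_ncard hsub
  rw [Set.ncard_coe_finset] at this
  unfold WithinTop
  omega

open Classical in
noncomputable def topSupporters [Fintype V] (R : V → C → C → Prop) (c : C) (j : ℕ) : Finset V :=
  {i | WithinTop (R i) c j}

lemma topSupporters_card [Fintype V] [Fintype C] (R : V → C → C → Prop) (c : C) :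
    topSupporters R c (Fintype.card C) = univ := by
  simp [topSupporters, withinTop_card]

lemma subset_topSupporters [Fintype V] {R : V → C → C → Prop} {N' : Finset V} {C' : Finset C}
    (hs : SolidCoalition R N' C') {c : C} (hc : c ∈ C') : N' ⊆ topSupporters R c C'.card :=
  fun _ hi => by simpa [topSupporters] using withinTop_of_solidCoalition hs hi hc

lemma disjoint_topSupporters [Fintype V] [Finite C] {R : V → C → C → Prop} {N' : Finset V}
    {C' : Finset C} (hs : SolidCoalition R N' C') {c : C} (hc : c ∉ C') {j : ℕ} (hj : j ≤ C'.card) :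
    Disjoint N' (topSupporters R c j) :=
  disjoint_left.2 fun _ hi => by
    simpa [topSupporters] using not_withinTop_of_solidCoalition hs hi hc hj

open Classical in
/-- The voters of `S` jointly pay `q`, each in proportion to its weight. -/
noncomputable def reweight (w : V → ℝ) (S : Finset V) (q : ℝ) (i : V) : ℝ :=
  if i ∈ S then w i * (1 - q / ∑ j ∈ S, w j) else w i

section reweight

variable {w : V → ℝ} {S : Finset V} {q : ℝ}

lemma sum_reweight [DecidableEq V] (N : Finset V) :
    ∑ i ∈ N, reweight w S q i = ∑ i ∈ N, w i - q / (∑ j ∈ S, w j) * ∑ i ∈ N ∩ S, w i := by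
  rw [← sum_ite_mem, mul_sum, ← sum_sub_distrib]
  refine sum_congr rfl fun i _ => ?_
  unfold reweight
  split_ifs <;> ring

lemma reweight_nonneg (hw : ∀ i, 0 ≤ w i) (hS : q ≤ ∑ i ∈ S, w i) (i : V) :
    0 ≤ reweight w S q i := by
  have : q / ∑ i ∈ S, w i ≤ 1 := div_le_one_of_le₀ hS (sum_nonneg fun i _ => hw i)
  unfold reweight
  split_ifs
  exacts [mul_nonneg (hw i) (by linarith), hw i]

lemma sum_univ_reweight [Fintype V] (hq : 0 < q) (hS : q ≤ ∑ i ∈ S, w i) :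
    ∑ i, reweight w S q i = ∑ i, w i - q := by
  classical
  rw [sum_reweight, univ_inter, div_mul_cancel₀ q (hq.trans_le hS).ne']

lemma sum_sub_le_sum_reweight (hw : ∀ i, 0 ≤ w i) (hq : 0 < q) (hS : q ≤ ∑ i ∈ S, w i)
    (N : Finset V) : ∑ i ∈ N, w i - q ≤ ∑ i ∈ N, reweight w S q i := by
  classical
  have hσ : 0 < ∑ i ∈ S, w i := hq.trans_le hS
  have hpaid : q / (∑ j ∈ S, w j) * ∑ i ∈ N ∩ S, w i ≤ q := by
    calc q / (∑ j ∈ S, w j) * ∑ i ∈ N ∩ S, w i ≤ q / (∑ j ∈ S, w j) * ∑ j ∈ S, w j := by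
          refine mul_le_mul_of_nonneg_left ?_ (div_nonneg hq.le hσ.le)
          exact sum_le_sum_of_subset_of_nonneg inter_subset_right fun i _ _ => hw i
      _ = q := div_mul_cancel₀ q hσ.ne'
  rw [sum_reweight]
  linarith

lemma sum_reweight_of_disjoint {N : Finset V} (h : Disjoint N S) :
    ∑ i ∈ N, reweight w S q i = ∑ i ∈ N, w i := by
  classical
  rw [sum_reweight, disjoint_iff_inter_eq_empty.1 h, sum_empty, mul_zero, sub_zero]

end reweight

section STVState

variable [Fintype V] {R : V → C → C → Prop} {q : ℝ}

lemma exists_minimal_quota_depth [Fintype C] {w : V → ℝ} (hq : q ≤ ∑ i, w i) {W : Finset C}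
    (hW : W.card < Fintype.card C) :
    ∃ c ∉ W, ∃ j, q ≤ ∑ i ∈ topSupporters R c j, w i ∧
      ∀ c' ∉ W, ∀ j', q ≤ ∑ i ∈ topSupporters R c' j', w i → j ≤ j' := by
  classical
  obtain ⟨c₀, -, hc₀⟩ := exists_mem_notMem_of_card_lt_card (s := W) (t := univ) (by simpa)
  have hex : ∃ j, ∃ c ∉ W, q ≤ ∑ i ∈ topSupporters R c j, w i :=
    ⟨Fintype.card C, c₀, hc₀, by rwa [topSupporters_card]⟩
  obtain ⟨c, hc, hcq⟩ := Nat.find_spec hex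
  exact ⟨c, hc, Nat.find hex, hcq, fun c' hc' j' h => Nat.find_min' hex ⟨c', hc', h⟩⟩

variable [DecidableEq C]

def DemandCovered (q : ℝ) (W : Finset C) (w : V → ℝ) (ℓ : ℕ) (N' : Finset V) (C' : Finset C) :
    Prop :=
  min ℓ C'.card ≤ (W ∩ C').card ∨ ((ℓ : ℝ) - (W ∩ C').card) * q ≤ ∑ i ∈ N', w i

lemma DemandCovered.elect [Finite C] {W : Finset C} {w : V → ℝ} {ℓ : ℕ} {N' : Finset V}
    {C' : Finset C} {c : C} {j : ℕ} (hw : ∀ i, 0 ≤ w i) (hq : 0 < q)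
    (hσ : q ≤ ∑ i ∈ topSupporters R c j, w i)
    (hmin : ∀ c' ∉ W, q ≤ ∑ i ∈ topSupporters R c' C'.card, w i → j ≤ C'.card) (hc : c ∉ W)
    (hs : SolidCoalition R N' C') (h : DemandCovered q W w ℓ N' C') :
    DemandCovered q (insert c W) (reweight w (topSupporters R c j) q) ℓ N' C' := by
  have hmono : (W ∩ C').card ≤ (insert c W ∩ C').card :=
    card_le_card (inter_subset_inter_right (subset_insert c W))
  by_cases hsat : min ℓ C'.card ≤ (W ∩ C').card
  · exact Or.inl (hsat.trans hmono)
  have h := h.resolve_left hsat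
  obtain ⟨hℓ, hC'⟩ := lt_min_iff.1 (not_le.1 hsat)
  have hNq : q ≤ ∑ i ∈ N', w i := by
    have : (1 : ℝ) ≤ ℓ - (W ∩ C').card := by
      rw [le_sub_iff_add_le']; exact_mod_cast hℓ
    nlinarith
  right
  by_cases hcC : c ∈ C'
  · have hcard : (insert c W ∩ C').card = (W ∩ C').card + 1 := by
      rw [insert_inter_of_mem hcC, card_insert_of_notMem fun h => hc (mem_inter.1 h).1]
    have := sum_sub_le_sum_reweight hw hq hσ N'
    rw [hcard]; push_cast; linarith
  · -- some `c' ∈ C' \ W` reaches quota at depth `|C'|`, so `c` was elected at depth `≤ |C'|`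
    obtain ⟨c', hc'C, hc'W⟩ := exists_mem_notMem_of_card_lt_card hC'
    have hj : j ≤ C'.card := hmin c' (fun h => hc'W (mem_inter.2 ⟨h, hc'C⟩)) <|
      hNq.trans (sum_le_sum_of_subset_of_nonneg (subset_topSupporters hs hc'C)
        fun i _ _ => hw i)
    rwa [insert_inter_of_notMem hcC,
      sum_reweight_of_disjoint (disjoint_topSupporters hs hcC hj)]

variable (R q) in
/-- The state of q-STV after electing `W`, with `w` the voters' remaining weights. -/
structure IsSTVState (W : Finset C) (w : V → ℝ) : Prop where
  nonneg : ∀ i, 0 ≤ w i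
  sum_eq : ∑ i, w i = Fintype.card V - W.card * q
  demandCovered : ∀ (ℓ : ℕ) (N' : Finset V) (C' : Finset C), SolidCoalition R N' C' →
    ℓ * q ≤ N'.card → DemandCovered q W w ℓ N' C'

lemma isSTVState_empty : IsSTVState R q ∅ fun _ => 1 where
  nonneg _ := zero_le_one
  sum_eq := by simp
  demandCovered _ _ _ _ hN := Or.inr (by simpa using hN)

lemma IsSTVState.exists_insert [Fintype C] {W : Finset C} {w : V → ℝ}
    (h : IsSTVState R q W w) (hq : 0 < q) (hn : (W.card + 1) * q ≤ Fintype.card V)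
    (hW : W.card < Fintype.card C) : ∃ c ∉ W, ∃ w', IsSTVState R q (insert c W) w' := by
  obtain ⟨c, hc, j, hσ, hmin⟩ :=
    exists_minimal_quota_depth (R := R) (q := q) (by rw [h.sum_eq]; linarith) hW
  refine ⟨c, hc, reweight w (topSupporters R c j) q, reweight_nonneg h.nonneg hσ, ?_, ?_⟩
  · rw [sum_univ_reweight hq hσ, h.sum_eq, card_insert_of_notMem hc]
    push_cast; ring
  · exact fun ℓ N' C' hs hN => (h.demandCovered ℓ N' C' hs hN).elect h.nonneg hq hσ
      (fun c' hc' => hmin c' hc' _) hc hs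

lemma exists_isSTVState [Fintype C] (hq : 0 < q) :
    ∀ k : ℕ, k * q ≤ Fintype.card V → k ≤ Fintype.card C →
      ∃ W w, W.card = k ∧ IsSTVState R q W w
  | 0, _, _ => ⟨∅, _, rfl, isSTVState_empty⟩
  | k + 1, hn, hkC => by
    push_cast at hn
    obtain ⟨W, w, rfl, h⟩ := exists_isSTVState hq k (by linarith) (by omega)
    obtain ⟨c, hc, w', h'⟩ := h.exists_insert hq hn hkC
    exact ⟨_, w', card_insert_of_notMem hc, h'⟩

lemma IsSTVState.qpsc {W : Finset C} {w : V → ℝ} (h : IsSTVState R q W w)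
    (hn : Fintype.card V < (W.card + 1) * q) : QPSC R W q := by
  intro ℓ _ N' C' hs hN
  by_contra hunmet
  have hcov := (h.demandCovered ℓ N' C' hs hN).resolve_left hunmet
  have hℓ : (1 : ℝ) ≤ ℓ - (W ∩ C').card := by
    rw [le_sub_iff_add_le']; exact_mod_cast (lt_min_iff.1 (not_le.1 hunmet)).1
  have hN'w : ∑ i ∈ N', w i ≤ Fintype.card V - W.card * q :=
    h.sum_eq ▸ sum_le_sum_of_subset_of_nonneg (subset_univ _) fun i _ _ => h.nonneg i
  have hq : 0 < q := by
    have : (0 : ℝ) ≤ Fintype.card V := Nat.cast_nonneg _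
    nlinarith
  nlinarith

end STVState

theorem exists_committee_qPSC_general
    {V C : Type*} [Fintype V] [Fintype C] [DecidableEq C]
    (R : V → C → C → Prop)
    (k : ℕ) (hkm : k ≤ Fintype.card C)
    (q : ℝ)
    (hql : (Fintype.card V : ℝ) / ((k : ℝ) + 1) < q)
    (hqu : q ≤ (Fintype.card V : ℝ) / (k : ℝ)) :
    ∃ W : Finset C, W.card = k ∧ QPSC R W q := by
  have hq : 0 < q := (div_nonneg (Nat.cast_nonneg _) (by positivity)).trans_lt hql
  have hnq : (Fintype.card V : ℝ) < (k + 1) * q := by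
    rwa [div_lt_iff₀ (by positivity), mul_comm] at hql
  have hkq : k * q ≤ Fintype.card V := by
    rcases k.eq_zero_or_pos with rfl | hk
    · simp
    · rwa [le_div_iff₀ (by exact_mod_cast hk), mul_comm] at hqu
  obtain ⟨W, w, rfl, hW⟩ := exists_isSTVState (R := R) hq k hkq hkm
  exact ⟨W, rfl, hW.qpsc hnq⟩

/-- for every profile of linear orders and every quota q with
n/(k+1) < q ≤ n/k, there exists a size-k committee satisfying q-PSC. -/
theorem exists_committee_qPSC
    {V C : Type*} [Fintype V] [Fintype C] [DecidableEq C]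
    (R : V → C → C → Prop) (hR : ∀ i : V, LinearPrefRel (R i))
    (k : ℕ) (hk1 : 1 ≤ k) (hkm : k ≤ Fintype.card C)
    (q : ℝ)
    (hql : (Fintype.card V : ℝ) / ((k : ℝ) + 1) < q)
    (hqu : q ≤ (Fintype.card V : ℝ) / (k : ℝ)) :
    ∃ W : Finset C, W.card = k ∧ QPSC R W q :=
  exists_committee_qPSC_general R k hkm q hql hqu
end
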